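/- Let p ≤ n, let α ∈ I_n have dom(α) = {d₁ < d₂ < ⋯ < d_p} and set m_i = d_iα for i = 1,…,p. Then α ∈ IOF_n^par if and only if the following four conditions hold: (i) m₁ < m₂ < ⋯ < m_p; (ii) d₁ and m₁ have the same parity; (iii) for all i ∈ {1,…,p−1}, d_{i+1} − d_i = 1 if and only if m_{i+1} − m_i = 1; (iv) for all i ∈ {1,…,p−1}, d_{i+1} − d_i is even if and only if m_{i+1} − m_i is even. -/

import Mathlib

namespace IOFpar

/-- A partial injection on the chain `{1, …, n}`: a partial function with domain and
image contained in `{1, …, n}` that is injective where defined. -/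
structure PInj (n : ℕ) where
  f : ℕ → Option ℕ
  mem_bounds : ∀ ⦃x y : ℕ⦄, f x = some y → x ∈ Finset.Icc 1 n ∧ y ∈ Finset.Icc 1 n
  inj : ∀ ⦃x₁ x₂ y : ℕ⦄, f x₁ = some y → f x₂ = some y → x₁ = x₂

/-- The domain of a partial injection. -/
def PInj.dom {n : ℕ} (α : PInj n) : Finset ℕ :=
  (Finset.Icc 1 n).filter fun x => (α.f x).isSome

open Classical in
/-- The image of a partial injection. -/
noncomputable def PInj.im {n : ℕ} (α : PInj n) : Finset ℕ :=
  (Finset.Icc 1 n).filter fun y => ∃ x, α.f x = some y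

/-- The rank of a partial injection: the size of its domain. -/
def PInj.rank {n : ℕ} (α : PInj n) : ℕ := α.dom.card

/-- The value of `α` at `x` (with junk value `0` outside the domain). -/
def PInj.app {n : ℕ} (α : PInj n) (x : ℕ) : ℕ := (α.f x).getD 0

/-- Composition of partial injections: `α.comp β` applies `α` first, then `β`
(so it corresponds to the product `αβ` with arguments written on the left). -/
def PInj.comp {n : ℕ} (α β : PInj n) : PInj n where
  f x := (α.f x).bind β.f
  mem_bounds := by
    intro x y h
    rcases Option.bind_eq_some_iff.mp h with ⟨z, hz, hzy⟩
    exact ⟨(α.mem_bounds hz).1, (β.mem_bounds hzy).2⟩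
  inj := by
    intro x₁ x₂ y h₁ h₂
    rcases Option.bind_eq_some_iff.mp h₁ with ⟨z₁, hz₁, hz₁y⟩
    rcases Option.bind_eq_some_iff.mp h₂ with ⟨z₂, hz₂, hz₂y⟩
    obtain rfl : z₁ = z₂ := β.inj hz₁y hz₂y
    exact α.inj hz₁ hz₂

/-- The empty transformation `ε`. -/
def epsilon (n : ℕ) : PInj n where
  f _ := none
  mem_bounds := by intro x y h; simp at h
  inj := by intro x₁ x₂ y h; simp at h

/-- The fence (zig-zag) order on `{1, …, n}`: `k ≺ m` iff `|k - m| = 1`, `k` is odd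
and `m` is even. -/
def fence (k m : ℕ) : Prop := (m = k + 1 ∨ k = m + 1) ∧ Odd k ∧ Even m

/-- `IOF n` is the set `IOF_n^par` of all partial injections on `{1, …, n}` that are
order-preserving, parity-preserving, fence-preserving, and whose inverse is also
fence-preserving. -/
def IOF (n : ℕ) : Set (PInj n) :=
  {α | (∀ ⦃x y x' y' : ℕ⦄, α.f x = some x' → α.f y = some y' → x < y → x' < y') ∧
       (∀ ⦃x y : ℕ⦄, α.f x = some y → x % 2 = y % 2) ∧
       (∀ ⦃x y x' y' : ℕ⦄, α.f x = some x' → α.f y = some y' → fence x y → fence x' y') ∧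
       (∀ ⦃x y x' y' : ℕ⦄, α.f x = some x' → α.f y = some y' → fence x' y' → fence x y)}

/-- The increasing enumeration of a finite set of naturals. -/
def sortedList (A : Finset ℕ) : List ℕ := A.sort (· ≤ ·)

/-- The relation `∼` on subsets of `{1, …, n}`:
`A ∼ B` iff `|A| = |B|`, corresponding elements (in increasing order) have the
same parity, and consecutive elements are at distance 1 in `A` iff they are in `B`. -/
def sim (A B : Finset ℕ) : Prop :=
  A.card = B.card ∧
  (∀ (r : ℕ) (hA : r < (sortedList A).length) (hB : r < (sortedList B).length),
    (sortedList A)[r] % 2 = (sortedList B)[r] % 2) ∧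
  (∀ (r : ℕ) (hA : r + 1 < (sortedList A).length) (hB : r + 1 < (sortedList B).length),
    ((sortedList A)[r + 1] = (sortedList A)[r] + 1 ↔
      (sortedList B)[r + 1] = (sortedList B)[r] + 1))

/-- `P ⊆ P(n̄)` is admissible: it contains `∅`, is convex, and is closed under `∼`. -/
def Admissible (n : ℕ) (P : Set (Finset ℕ)) : Prop :=
  (∀ A ∈ P, A ⊆ Finset.Icc 1 n) ∧
  (∅ : Finset ℕ) ∈ P ∧
  (∀ A ∈ P, ∀ B ∈ P, ∀ C : Finset ℕ, A ⊆ C → C ⊆ B → C ∈ P) ∧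
  (∀ y ∈ P, ∀ z : Finset ℕ, z ⊆ Finset.Icc 1 n → sim z y → z ∈ P)

/-- `I_X = {α ∈ IOF_n^par : dom(α) ∈ X}`. -/
def IX (n : ℕ) (X : Set (Finset ℕ)) : Set (PInj n) :=
  {α | α ∈ IOF n ∧ α.dom ∈ X}

/-- An ideal of the monoid `IOF_n^par`. -/
def IsIdeal (n : ℕ) (I : Set (PInj n)) : Prop :=
  I.Nonempty ∧ I ⊆ IOF n ∧ ∀ a ∈ I, ∀ b ∈ IOF n, a.comp b ∈ I ∧ b.comp a ∈ I

/-- `del y t` is `y^[t+1]` in the paper's (1-based) notation: `y` with its `t`-th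
smallest element removed (`t` being 0-based here). -/
def del (y : Finset ℕ) (t : ℕ) : Finset ℕ := y.erase ((sortedList y).getD t 0)

/-- `x ⊑ y`: `x` is obtained from `y` by removing one element. -/
def sqsub (x y : Finset ℕ) : Prop := ∃ t < y.card, x = del y t

/-- `A_Γ = {Δ ∈ P : Δ ∼ Γ}`. -/
def Aset (P : Set (Finset ℕ)) (Γ : Finset ℕ) : Set (Finset ℕ) :=
  {Δ ∈ P | sim Δ Γ}

/-- `B_Γ = {Δ^[t] : Δ ∈ A_Γ, t ∈ {1,…,|Δ|}}`. -/
def Bset (P : Set (Finset ℕ)) (Γ : Finset ℕ) : Set (Finset ℕ) :=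
  {D | ∃ Δ ∈ Aset P Γ, ∃ t < Δ.card, D = del Δ t}

/-- `B = {B_Γ : Γ ∈ P, |Γ| ≥ 2, |A_Γ| ≥ 2}`. -/
def Bfam (P : Set (Finset ℕ)) : Set (Set (Finset ℕ)) :=
  {E | ∃ Γ ∈ P, 2 ≤ Γ.card ∧ 2 ≤ (Aset P Γ).ncard ∧ E = Bset P Γ}

/-- `C = {{g} : g ∈ P, (g ⊑ y for some y ∈ P with y ≁ z for all z ∈ P \ {y}) or
(g ⋢ z for all z ∈ P)}`. -/
def Cfam (P : Set (Finset ℕ)) : Set (Set (Finset ℕ)) :=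
  {D | ∃ g ∈ P, D = {g} ∧
    ((∃ y ∈ P, sqsub g y ∧ ∀ z ∈ P, z ≠ y → ¬ sim y z) ∨ (∀ z ∈ P, ¬ sqsub g z))}

/-- `BC_{Δ₁} = {Δ ∈ B ∪ C : x ∼ y for all x ∈ Δ, y ∈ Δ₁}`. -/
def BCset (P : Set (Finset ℕ)) (Δ₁ : Set (Finset ℕ)) : Set (Set (Finset ℕ)) :=
  {Δ ∈ Bfam P ∪ Cfam P | ∀ x ∈ Δ, ∀ y ∈ Δ₁, sim x y}

/-- `T_Δ = {c ∈ I_P : dom(c) ∈ Δ, im(c) ∈ Δ}`. -/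
def Tset (n : ℕ) (P : Set (Finset ℕ)) (Δ : Set (Finset ℕ)) : Set (PInj n) :=
  {c ∈ IX n P | c.dom ∈ Δ ∧ c.im ∈ Δ}

/-- `T_Q` for a pair `Q = (Q₁, Q₂)`. -/
def TQ (n : ℕ) (P : Set (Finset ℕ)) (Q₁ Q₂ : Set (Set (Finset ℕ))) : Set (PInj n) :=
  {c ∈ IX n P | (∃ Δ ∈ Q₁, c.dom ∈ Δ) ∧ (∃ Δ ∈ Q₂, c.im ∈ Δ)}

/-- `I_P^u`: the elements of `I_P` that are not expressible in the special product form. -/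
def Iu (n : ℕ) (P : Set (Finset ℕ)) : Set (PInj n) :=
  {α ∈ IX n P | ¬ ∃ y₁ ∈ P, ∃ z₁ ∈ P, ∃ y₂ ∈ P, ∃ z₂ ∈ P, ∃ r < y₁.card, ∃ s < y₁.card,
    y₁.card = z₁.card ∧ 2 ≤ y₁.card ∧
    sim y₂ y₁ ∧ sim z₂ z₁ ∧
    del y₁ r = y₁ ∩ z₁ ∧ del z₁ s = y₁ ∩ z₁ ∧
    sim (del y₂ r) (del z₂ s) ∧ sim (del z₂ s) (y₁ ∩ z₁) ∧
    α.dom = del y₂ r ∧ α.im = del z₂ s}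

/-- `T` is a subsemigroup of `S` (a subset of `S` closed under composition). -/
def IsSubsemigroup (n : ℕ) (S T : Set (PInj n)) : Prop :=
  T ⊆ S ∧ ∀ a ∈ T, ∀ b ∈ T, a.comp b ∈ T

/-- `T` is a maximal subsemigroup of `S`. -/
def IsMaxSubsemigroup (n : ℕ) (S T : Set (PInj n)) : Prop :=
  IsSubsemigroup n S T ∧ T ≠ S ∧
  ∀ U : Set (PInj n), IsSubsemigroup n S U → T ⊆ U → U ⊆ S → U = T ∨ U = S

/-- The left "translate set" `Ma` in the monoid `M = IOF_n^par`. -/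
def lset (n : ℕ) (a : PInj n) : Set (PInj n) := {c | ∃ m ∈ IOF n, m.comp a = c}

/-- The right "translate set" `aM` in the monoid `M = IOF_n^par`. -/
def rset (n : ℕ) (a : PInj n) : Set (PInj n) := {c | ∃ m ∈ IOF n, a.comp m = c}

/-- The two-sided "translate set" `MaM` in the monoid `M = IOF_n^par`. -/
def jset (n : ℕ) (a : PInj n) : Set (PInj n) :=
  {c | ∃ m₁ ∈ IOF n, ∃ m₂ ∈ IOF n, (m₁.comp a).comp m₂ = c}

end IOFpar

/-!
Everything is read off the increasing enumeration `d₀ < d₁ < ⋯` of the domain. Order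
preservation is monotonicity of `i ↦ α dᵢ`. The parity of `α dᵢ` propagates from `α d₀` along
the gaps, since `dᵢ₊₁ - dᵢ` is even exactly when `dᵢ₊₁` and `dᵢ` have the same parity. Finally,
`k ≺ m` just says that `k` and `m` are adjacent and `k` is odd; once parities are preserved, the
fence conditions on `α` and `α⁻¹` therefore say that `α` preserves and reflects adjacency, and
adjacent elements of a strictly increasing sequence are consecutive terms.
-/

theorem Nat.even_sub_iff_mod_two_eq {m n : ℕ} (h : n ≤ m) : Even (m - n) ↔ m % 2 = n % 2 := by
  rw [Nat.even_sub h, Nat.even_iff, Nat.even_iff]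
  omega

namespace List.SortedLT

variable {l : List ℕ}

theorem eq_add_one_of_getElem_eq_add_one (hl : l.SortedLT) {i j : ℕ} {hi : i < l.length}
    {hj : j < l.length} (h : l[j] = l[i] + 1) : j = i + 1 := by
  have hij : i < j := hl.getElem_lt_getElem_iff.1 (by omega)
  by_contra hne
  have : l[i + 1] < l[j] := hl.getElem_lt_getElem_iff.2 (by omega)
  have : l[i] < l[i + 1] := hl.getElem_lt_getElem_iff.2 (by omega)
  omega

theorem strictMonoOn_iff (hl : l.SortedLT) (g : ℕ → ℕ) :
    StrictMonoOn g {x | x ∈ l} ↔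
      ∀ (i j : ℕ) (hi : i < l.length) (hj : j < l.length), i < j → g l[i] < g l[j] := by
  constructor
  · intro hg i j hi hj hij
    exact hg (l.getElem_mem hi) (l.getElem_mem hj) (hl.getElem_lt_getElem_iff.2 hij)
  · rintro hg _ hx _ hy hxy
    obtain ⟨i, hi, rfl⟩ := List.mem_iff_getElem.1 hx
    obtain ⟨j, hj, rfl⟩ := List.mem_iff_getElem.1 hy
    exact hg i j hi hj (hl.getElem_lt_getElem_iff.1 hxy)

theorem forall_mem_mod_two_eq_iff (hl : l.SortedLT) {g : ℕ → ℕ}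
    (hg : ∀ (i j : ℕ) (hi : i < l.length) (hj : j < l.length), i < j → g l[i] < g l[j]) :
    (∀ x ∈ l, x % 2 = g x % 2) ↔
      (∀ h0 : 0 < l.length, l[0] % 2 = g l[0] % 2) ∧
      ∀ (i : ℕ) (hi : i + 1 < l.length),
        (Even (l[i + 1] - l[i]) ↔ Even (g l[i + 1] - g l[i])) := by
  have gap_iff : ∀ (i : ℕ) (hi : i + 1 < l.length),
      (Even (l[i + 1] - l[i]) ↔ Even (g l[i + 1] - g l[i])) ↔
        (l[i + 1] % 2 = l[i] % 2 ↔ g l[i + 1] % 2 = g l[i] % 2) := fun i hi => by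
    rw [Nat.even_sub_iff_mod_two_eq (hl.getElem_le_getElem_iff.2 (Nat.le_succ i)),
      Nat.even_sub_iff_mod_two_eq (hg i (i + 1) _ hi (Nat.lt_succ_self i)).le]
  simp only [gap_iff, List.forall_mem_iff_getElem]
  constructor
  · intro h
    refine ⟨fun h0 => h 0 h0, fun i hi => ?_⟩
    have := h i (by omega)
    have := h (i + 1) hi
    omega
  · rintro ⟨h0, hgap⟩ i hi
    induction i with
    | zero => exact h0 hi
    | succ i ih =>
      have := ih (by omega)
      have := hgap i hi
      omega

theorem forall_mem_succ_iff (hl : l.SortedLT) {g : ℕ → ℕ}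
    (hg : ∀ (i j : ℕ) (hi : i < l.length) (hj : j < l.length), i < j → g l[i] < g l[j]) :
    (∀ x ∈ l, ∀ y ∈ l, (y = x + 1 ↔ g y = g x + 1)) ↔
      ∀ (i : ℕ) (hi : i + 1 < l.length), (l[i + 1] = l[i] + 1 ↔ g l[i + 1] = g l[i] + 1) := by
  have hgl : (l.map g).SortedLT :=
    List.sortedLT_iff_getElem_lt_getElem_of_lt.2 fun i j hi hj hij => by simpa using hg i j _ _ hij
  constructor
  · exact fun h i hi => h _ (l.getElem_mem _) _ (l.getElem_mem hi)
  · intro h x hx y hy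
    obtain ⟨i, hi, rfl⟩ := List.mem_iff_getElem.1 hx
    obtain ⟨j, hj, rfl⟩ := List.mem_iff_getElem.1 hy
    constructor
    · intro hij
      obtain rfl := hl.eq_add_one_of_getElem_eq_add_one hij
      exact (h i hj).1 hij
    · intro hij
      obtain rfl := hgl.eq_add_one_of_getElem_eq_add_one (i := i) (j := j)
        (hi := by simpa using hi) (hj := by simpa using hj) (by simpa using hij)
      exact (h i hj).2 hij

end List.SortedLT

namespace IOFpar

theorem fence_iff {k m : ℕ} : fence k m ↔ (m = k + 1 ∨ k = m + 1) ∧ k % 2 = 1 := by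
  rw [fence, Nat.odd_iff, Nat.even_iff]
  omega

theorem fence_iff_succ_of_strictMonoOn {s : Set ℕ} {g : ℕ → ℕ} (hg : StrictMonoOn g s)
    (hpar : ∀ x ∈ s, x % 2 = g x % 2) :
    ((∀ x ∈ s, ∀ y ∈ s, fence x y → fence (g x) (g y)) ∧
      (∀ x ∈ s, ∀ y ∈ s, fence (g x) (g y) → fence x y)) ↔
      ∀ x ∈ s, ∀ y ∈ s, (y = x + 1 ↔ g y = g x + 1) := by
  simp only [fence_iff]
  constructor
  · rintro ⟨hpres, hrefl⟩ x hx y hy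
    have := hpres x hx y hy; have := hpres y hy x hx
    have := hrefl x hx y hy; have := hrefl y hy x hx
    have := hg.lt_iff_lt hx hy; have := hpar x hx; have := hpar y hy
    omega
  · intro hsucc
    refine ⟨fun x hx y hy => ?_, fun x hx y hy => ?_⟩ <;>
    · have := hsucc x hx y hy; have := hsucc y hy x hx
      have := hpar x hx; have := hpar y hy
      omega

namespace PInj

variable {n : ℕ} (α : PInj n)

theorem f_eq_some_iff {x y : ℕ} : α.f x = some y ↔ x ∈ α.dom ∧ α.app x = y := by
  constructor
  · intro h
    exact ⟨Finset.mem_filter.2 ⟨(α.mem_bounds h).1, by simp [h]⟩, by simp [app, h]⟩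
  · rintro ⟨hx, rfl⟩
    obtain ⟨y, hy⟩ := Option.isSome_iff_exists.1 (Finset.mem_filter.1 hx).2
    simp [app, hy]

theorem mem_IOF_iff : α ∈ IOF n ↔
    StrictMonoOn α.app α.dom ∧
    (∀ x ∈ (α.dom : Set ℕ), x % 2 = α.app x % 2) ∧
    (∀ x ∈ (α.dom : Set ℕ), ∀ y ∈ (α.dom : Set ℕ), fence x y → fence (α.app x) (α.app y)) ∧
    (∀ x ∈ (α.dom : Set ℕ), ∀ y ∈ (α.dom : Set ℕ), fence (α.app x) (α.app y) → fence x y) := by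
  simp only [IOF, Set.mem_ofPred_eq, f_eq_some_iff, StrictMonoOn, Finset.mem_coe, and_imp]
  simp only [forall_comm (α := ℕ), forall_apply_eq_imp_iff₂, forall_apply_eq_imp_iff]

end PInj

theorem statement_0 (n : ℕ) (α : PInj n) :
    α ∈ IOF n ↔
      ((∀ (i j : ℕ) (hi : i < (sortedList α.dom).length)
          (hj : j < (sortedList α.dom).length), i < j →
          α.app ((sortedList α.dom)[i]) < α.app ((sortedList α.dom)[j])) ∧
       (∀ h0 : 0 < (sortedList α.dom).length,
          (sortedList α.dom)[0] % 2 = α.app ((sortedList α.dom)[0]) % 2) ∧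
       (∀ (i : ℕ) (hi : i + 1 < (sortedList α.dom).length),
          ((sortedList α.dom)[i + 1] = (sortedList α.dom)[i] + 1 ↔
            α.app ((sortedList α.dom)[i + 1]) = α.app ((sortedList α.dom)[i]) + 1)) ∧
       (∀ (i : ℕ) (hi : i + 1 < (sortedList α.dom).length),
          (Even ((sortedList α.dom)[i + 1] - (sortedList α.dom)[i]) ↔
            Even (α.app ((sortedList α.dom)[i + 1]) - α.app ((sortedList α.dom)[i]))))) := by
  have hsorted : (sortedList α.dom).SortedLT := α.dom.sortedLT_sort
  have hdom : (α.dom : Set ℕ) = {x | x ∈ sortedList α.dom} := by ext; simp [sortedList]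
  rw [α.mem_IOF_iff, hdom]
  constructor
  · rintro ⟨hmonoOn, hpar, hfence⟩
    have hmono := (hsorted.strictMonoOn_iff _).1 hmonoOn
    obtain ⟨hfirst, hgap⟩ := (hsorted.forall_mem_mod_two_eq_iff hmono).1 hpar
    exact ⟨hmono, hfirst, (hsorted.forall_mem_succ_iff hmono).1
      ((fence_iff_succ_of_strictMonoOn hmonoOn hpar).1 hfence), hgap⟩
  · rintro ⟨hmono, hfirst, hsucc, hgap⟩
    have hmonoOn := (hsorted.strictMonoOn_iff _).2 hmono
    have hpar := (hsorted.forall_mem_mod_two_eq_iff hmono).2 ⟨hfirst, hgap⟩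
    exact ⟨hmonoOn, hpar, (fence_iff_succ_of_strictMonoOn hmonoOn hpar).2
      ((hsorted.forall_mem_succ_iff hmono).2 hsucc)⟩

end IOFpar
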